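/- arXiv:2311.12242 — 7 statements merged into one kernel-verified Lean document; each statement's English description precedes it below -/
import Mathlib

section
/- A smooth, compact, convex set C in ℝ^n (i.e., a nonempty compact convex set admitting a unique supporting hyperplane at every boundary point, and containing at least two points) has nonempty interior in ℝ^n. -/
/-- A supporting hyperplane of `C` at `x` is a set `H = {y | ⟪p, y⟫ = c}` with `p ≠ 0`,
containing `x`, such that `⟪p, y⟫ ≤ c` for all `y ∈ C`. -/
def IsSupportingHyperplane {n : ℕ} (C : Set (EuclideanSpace ℝ (Fin n)))
    (x : EuclideanSpace ℝ (Fin n)) (H : Set (EuclideanSpace ℝ (Fin n))) : Prop :=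
  ∃ (p : EuclideanSpace ℝ (Fin n)) (c : ℝ), p ≠ 0 ∧
    H = {y | (inner ℝ p y : ℝ) = c} ∧ (inner ℝ p x : ℝ) = c ∧ ∀ y ∈ C, (inner ℝ p y : ℝ) ≤ c

/-- A smooth convex body: nonempty, compact, convex, not a singleton, and admitting a
unique supporting hyperplane at every boundary point. -/
def SmoothConvexBody {n : ℕ} (C : Set (EuclideanSpace ℝ (Fin n))) : Prop :=
  C.Nonempty ∧ IsCompact C ∧ Convex ℝ C ∧ (∀ x, C ≠ {x}) ∧
    ∀ x ∈ frontier C, ∃! H : Set (EuclideanSpace ℝ (Fin n)), IsSupportingHyperplane C x H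

/-- A smooth, compact, convex set in ℝⁿ has nonempty interior. -/
theorem smooth_convex_body_interior_nonempty {n : ℕ}
    (C : Set (EuclideanSpace ℝ (Fin n))) (hC : SmoothConvexBody C) :
    (interior C).Nonempty := by
  obtain ⟨hne, hcomp, hconv, hnotsingle, huniq⟩ := hC
  by_contra hempty
  rw [Set.not_nonempty_iff_eq_empty] at hempty
  -- The affine span is not the whole space
  have hspan : affineSpan ℝ C ≠ ⊤ := by
    intro htop
    have := hconv.interior_nonempty_iff_affineSpan_eq_top.mpr htop
    rw [hempty] at this
    exact Set.not_nonempty_empty this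
  -- Two distinct points of C
  obtain ⟨y1, hy1⟩ := id hne
  obtain ⟨y2, hy2, hy12⟩ : ∃ y2 ∈ C, y2 ≠ y1 := by
    by_contra h
    push_neg at h
    exact hnotsingle y1 (Set.eq_singleton_iff_unique_mem.mpr ⟨hy1, h⟩)
  set d : EuclideanSpace ℝ (Fin n) := y2 - y1 with hd
  have hdne : d ≠ 0 := sub_ne_zero.mpr hy12
  -- A nonzero vector orthogonal to the direction of the affine span
  have hdir : (affineSpan ℝ C).direction ≠ ⊤ := by
    intro h
    exact hspan ((AffineSubspace.direction_eq_top_iff_of_nonempty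
      ((affineSpan_nonempty (k := ℝ)).mpr hne)).mp h)
  obtain ⟨p, hpmem, hpne⟩ : ∃ p ∈ (affineSpan ℝ C).directionᗮ, p ≠ 0 := by
    by_contra h
    push_neg at h
    have : (affineSpan ℝ C).directionᗮ = ⊥ := by
      ext v
      simp only [Submodule.mem_bot]
      constructor
      · intro hv
        by_contra hv0
        exact hv0 (h v hv)
      · intro hv; simp [hv]
    exact hdir (Submodule.orthogonal_eq_bot_iff.mp this)
  -- inner ℝ p is constant on C
  have hpconst : ∀ y ∈ C, (inner ℝ p y : ℝ) = inner ℝ p y1 := by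
    intro y hy
    have hmem : y -ᵥ y1 ∈ (affineSpan ℝ C).direction :=
      AffineSubspace.vsub_mem_direction (subset_affineSpan ℝ C hy) (subset_affineSpan ℝ C hy1)
    have := hpmem _ hmem
    have : (inner ℝ p (y - y1) : ℝ) = 0 := by
      rw [real_inner_comm]; exact this
    rw [inner_sub_right] at this
    linarith
  -- x maximizes ⟪d, ·⟫ on C
  obtain ⟨x, hxC, hxmax⟩ := hcomp.exists_isMaxOn (f := fun y => (inner ℝ d y : ℝ)) hne
    (Continuous.continuousOn (continuous_const.inner continuous_id))
  -- x is a frontier point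
  have hfront : x ∈ frontier C := by
    rw [frontier, hempty, Set.diff_empty]
    exact subset_closure hxC
  obtain ⟨H, hH, hHuniq⟩ := huniq x hfront
  -- Two supporting hyperplanes at x
  have hH1 : IsSupportingHyperplane C x {y | (inner ℝ p y : ℝ) = inner ℝ p x} :=
    ⟨p, inner ℝ p x, hpne, rfl, rfl, fun y hy => le_of_eq ((hpconst y hy).trans (hpconst x hxC).symm)⟩
  have hH2 : IsSupportingHyperplane C x {y | (inner ℝ d y : ℝ) = inner ℝ d x} :=
    ⟨d, inner ℝ d x, hdne, rfl, rfl, fun y hy => by simpa using hxmax hy⟩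
  have he1 := hHuniq _ hH1
  have he2 := hHuniq _ hH2
  have heq : {y : EuclideanSpace ℝ (Fin n) | (inner ℝ p y : ℝ) = inner ℝ p x} =
      {y | (inner ℝ d y : ℝ) = inner ℝ d x} := he1.trans he2.symm
  -- y1 and y2 are both in the first set
  have hy1m : y1 ∈ {y : EuclideanSpace ℝ (Fin n) | (inner ℝ p y : ℝ) = inner ℝ p x} := by
    simp only [Set.mem_setOf_eq]
    exact (hpconst y1 hy1).trans (hpconst x hxC).symm
  have hy2m : y2 ∈ {y : EuclideanSpace ℝ (Fin n) | (inner ℝ p y : ℝ) = inner ℝ p x} := by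
    simp only [Set.mem_setOf_eq]
    exact (hpconst y2 hy2).trans (hpconst x hxC).symm
  rw [heq] at hy1m hy2m
  simp only [Set.mem_setOf_eq] at hy1m hy2m
  have : (inner ℝ d y2 : ℝ) - inner ℝ d y1 = inner ℝ d d := by rw [hd, inner_sub_right]
  have hpos : (0:ℝ) < inner ℝ d d := by rw [real_inner_self_eq_norm_sq]; exact pow_pos (norm_pos_iff.mpr hdne) 2
  rw [hy1m, hy2m] at this
  linarith
end

section
/- Let W ⊆ ℝ^n be a smooth, compact, convex set, let v be a boundary point of W, and let λ ≠ 0 be the normal of the unique supporting hyperplane of W at v (so λ·v ≥ λ·x for all x ∈ W). Then for any y ∈ ℝ^n with λ·v > λ·y, there exists α* ∈ (0,1) such that (1−α)v + αy lies in the interior of W for all α ∈ (0, α*). -/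
set_option linter.unnecessarySeqFocus false

lemma scb_interior_nonempty {n : ℕ} {W : Set (EuclideanSpace ℝ (Fin n))}
    (hW : SmoothConvexBody W) : (interior W).Nonempty := by
  obtain ⟨hne, hcomp, hconv, hnosing, huniq⟩ := hW
  by_contra hInt
  rw [Set.not_nonempty_iff_eq_empty] at hInt
  have hclosed : IsClosed W := hcomp.isClosed
  have hfr : frontier W = W := by
    rw [frontier, hInt, hclosed.closure_eq, Set.diff_empty]
  obtain ⟨v₀, hv₀⟩ := hne
  -- a second point
  obtain ⟨b, hb, hbne⟩ : ∃ b ∈ W, b ≠ v₀ := by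
    by_contra h
    push_neg at h
    exact hnosing v₀ (Set.eq_singleton_iff_unique_mem.2 ⟨hv₀, h⟩)
  -- affine span not top
  have hspan : affineSpan ℝ W ≠ ⊤ := by
    intro h
    rw [← hconv.interior_nonempty_iff_affineSpan_eq_top] at h
    rw [hInt] at h
    exact Set.not_nonempty_empty h
  set D : Submodule ℝ (EuclideanSpace ℝ (Fin n)) := (affineSpan ℝ W).direction with hD
  have hDne : D ≠ ⊤ := by
    intro h
    exact hspan (AffineSubspace.direction_eq_top_iff_of_nonempty
      (⟨v₀, subset_affineSpan ℝ W hv₀⟩) |>.1 h)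
  have hDbot : Dᗮ ≠ ⊥ := fun h => hDne (Submodule.orthogonal_eq_bot_iff.1 h)
  obtain ⟨p, hpD, hp0⟩ := Submodule.exists_mem_ne_zero_of_ne_bot hDbot
  -- p is constant on W
  have hpc : ∀ x ∈ W, (inner ℝ p x : ℝ) = (inner ℝ p v₀ : ℝ) := by
    intro x hx
    have hdir : x - v₀ ∈ D :=
      AffineSubspace.vsub_mem_direction (subset_affineSpan ℝ W hx) (subset_affineSpan ℝ W hv₀)
    have := (Submodule.mem_orthogonal D p).1 hpD (x - v₀) hdir
    have h2 : (inner ℝ p (x - v₀) : ℝ) = 0 := by rwa [real_inner_comm]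
    rw [inner_sub_right] at h2
    linarith
  -- find u ≠ 0 orthogonal to p
  obtain ⟨u, hup, hu0⟩ : ∃ u : EuclideanSpace ℝ (Fin n), (inner ℝ p u : ℝ) = 0 ∧ u ≠ 0 := by
    by_cases h : (ℝ ∙ p)ᗮ = ⊥
    · exfalso
      have htop : (ℝ ∙ p) = ⊤ := Submodule.orthogonal_eq_bot_iff.1 h
      have : b - v₀ ∈ ℝ ∙ p := htop ▸ Submodule.mem_top
      obtain ⟨t, ht⟩ := Submodule.mem_span_singleton.1 this
      have hinner : (inner ℝ p (b - v₀) : ℝ) = 0 := by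
        have := hpc b hb
        rw [inner_sub_right]; linarith
      rw [← ht, real_inner_smul_right, real_inner_self_eq_norm_sq] at hinner
      have ht0 : t = 0 := by
        rcases mul_eq_zero.1 hinner with h | h
        · exact h
        · exact absurd (pow_eq_zero_iff (n := 2) two_ne_zero |>.1 h)
            (norm_ne_zero_iff.2 hp0)
      apply hbne
      have : b - v₀ = 0 := by rw [← ht, ht0, zero_smul]
      exact sub_eq_zero.1 this
    · obtain ⟨u, huD, hu0⟩ := Submodule.exists_mem_ne_zero_of_ne_bot h
      exact ⟨u, Submodule.mem_orthogonal_singleton_iff_inner_right.1 huD, hu0⟩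
  -- maximize u over W
  have hcont : Continuous fun x : EuclideanSpace ℝ (Fin n) => (inner ℝ u x : ℝ) :=
    Continuous.inner continuous_const continuous_id
  obtain ⟨x₀, hx₀W, hx₀max⟩ := hcomp.exists_isMaxOn ⟨v₀, hv₀⟩ hcont.continuousOn
  have hx₀fr : x₀ ∈ frontier W := by rw [hfr]; exact hx₀W
  -- two distinct supporting hyperplanes at x₀
  have hH1 : IsSupportingHyperplane W x₀ {z | (inner ℝ p z : ℝ) = (inner ℝ p x₀ : ℝ)} :=
    ⟨p, inner ℝ p x₀, hp0, rfl, rfl, fun x hx => le_of_eq (by rw [hpc x hx, hpc x₀ hx₀W])⟩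
  have hH2 : IsSupportingHyperplane W x₀ {z | (inner ℝ u z : ℝ) = (inner ℝ u x₀ : ℝ)} :=
    ⟨u, inner ℝ u x₀, hu0, rfl, rfl, fun x hx => hx₀max hx⟩
  obtain ⟨H, _, hHuniq⟩ := huniq x₀ hx₀fr
  have heq : ({z | (inner ℝ p z : ℝ) = (inner ℝ p x₀ : ℝ)} : Set _)
      = {z | (inner ℝ u z : ℝ) = (inner ℝ u x₀ : ℝ)} := by
    rw [hHuniq _ hH1, hHuniq _ hH2]
  -- but x₀ + u is in the first and not the second
  have hmem : x₀ + u ∈ {z | (inner ℝ p z : ℝ) = (inner ℝ p x₀ : ℝ)} := by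
    simp only [Set.mem_setOf_eq, inner_add_right, hup, add_zero]
  rw [heq] at hmem
  simp only [Set.mem_setOf_eq, inner_add_right] at hmem
  have : (inner ℝ u u : ℝ) = 0 := by linarith
  exact hu0 (inner_self_eq_zero.1 this)

lemma aux_subset_closure_interior {n : ℕ} {W : Set (EuclideanSpace ℝ (Fin n))}
    (hconv : Convex ℝ W) {z : EuclideanSpace ℝ (Fin n)} (hz : z ∈ interior W) :
    W ⊆ closure (interior W) := by
  intro a ha
  have htend0 : Filter.Tendsto (fun k : ℕ => (1 : ℝ) / (k + 2)) Filter.atTop (nhds 0) := by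
    apply Filter.Tendsto.div_atTop tendsto_const_nhds
    exact Filter.tendsto_atTop_add_const_right _ 2 tendsto_natCast_atTop_atTop
  have hseq : ∀ k : ℕ, ((1:ℝ)/(k+2)) • z + (1 - (1:ℝ)/(k+2)) • a ∈ interior W := by
    intro k
    have h1 : (0:ℝ) < 1/(k+2) := by positivity
    have h2 : (1:ℝ)/(k+2) ≤ 1 := by
      rw [div_le_one (by positivity)]
      have : (0:ℝ) ≤ (k:ℝ) := Nat.cast_nonneg k
      linarith
    exact hconv.combo_interior_self_mem_interior hz ha h1 (by linarith) (by ring)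
  refine mem_closure_of_tendsto (f := fun k : ℕ => ((1:ℝ)/(k+2)) • z + (1 - (1:ℝ)/(k+2)) • a)
    (b := Filter.atTop) ?_ (Filter.Eventually.of_forall hseq)
  have h1 : Filter.Tendsto (fun k : ℕ => ((1:ℝ)/(k+2)) • z + (1 - (1:ℝ)/(k+2)) • a)
      Filter.atTop (nhds ((0:ℝ) • z + ((1:ℝ) - 0) • a)) :=
    (htend0.smul_const z).add (((tendsto_const_nhds (x := (1:ℝ))).sub htend0).smul_const a)
  simpa using h1


/-- From a boundary point of a smooth compact convex set, moving towards any point on the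
strictly lower side of the supporting hyperplane enters the interior for small steps. -/
theorem smooth_boundary_segment_interior {n : ℕ}
    (W : Set (EuclideanSpace ℝ (Fin n))) (hW : SmoothConvexBody W)
    (v : EuclideanSpace ℝ (Fin n)) (hv : v ∈ frontier W)
    (lam : EuclideanSpace ℝ (Fin n)) (hlam : lam ≠ 0)
    (hsupp : ∀ x ∈ W, (inner ℝ lam x : ℝ) ≤ (inner ℝ lam v : ℝ))
    (y : EuclideanSpace ℝ (Fin n)) (hy : (inner ℝ lam y : ℝ) < (inner ℝ lam v : ℝ)) :
    ∃ αs ∈ Set.Ioo (0:ℝ) 1, ∀ α ∈ Set.Ioo (0:ℝ) αs,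
      (1 - α) • v + α • y ∈ interior W := by
  obtain ⟨hne, hcomp, hconv, hnosing, huniq⟩ := hW
  have hclosed : IsClosed W := hcomp.isClosed
  have hvW : v ∈ W := by
    have := frontier_subset_closure hv
    rwa [hclosed.closure_eq] at this
  obtain ⟨z, hz⟩ := scb_interior_nonempty ⟨hne, hcomp, hconv, hnosing, huniq⟩
  have hWsub : W ⊆ closure (interior W) := aux_subset_closure_interior hconv hz
  -- reduce to finding a single good α₀
  suffices hkey : ∃ α₀ ∈ Set.Ioo (0:ℝ) 1, (1-α₀) • v + α₀ • y ∈ interior W by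
    obtain ⟨α₀, hα₀, hmem⟩ := hkey
    refine ⟨α₀, hα₀, fun α hα => ?_⟩
    have hα₀0 : α₀ ≠ 0 := ne_of_gt hα₀.1
    have hcomb : (1-α) • v + α • y
        = (1 - α/α₀) • v + (α/α₀) • ((1-α₀) • v + α₀ • y) := by
      match_scalars <;> field_simp <;> ring
    rw [hcomb]
    refine hconv.combo_closure_interior_mem_interior (subset_closure hvW) hmem ?_ ?_ (by ring)
    · have : α/α₀ ≤ 1 := by
        rw [div_le_one hα₀.1]; exact le_of_lt hα.2
      linarith
    · exact div_pos hα.1 hα₀.1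
  by_contra hcon
  push_neg at hcon
  -- the sequence of bad points
  set α : ℕ → ℝ := fun k => 1/(k+2) with hαdef
  have hαmem : ∀ k, α k ∈ Set.Ioo (0:ℝ) 1 := by
    intro k
    constructor
    · positivity
    · rw [hαdef]
      simp only
      rw [div_lt_one (by positivity)]
      have : (0:ℝ) ≤ (k:ℝ) := Nat.cast_nonneg k
      linarith
  have hαtend : Filter.Tendsto α Filter.atTop (nhds 0) := by
    apply Filter.Tendsto.div_atTop tendsto_const_nhds
    exact Filter.tendsto_atTop_add_const_right _ 2 tendsto_natCast_atTop_atTop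
  have hpt : ∀ k, (1 - α k) • v + (α k) • y ∉ interior W := fun k => hcon (α k) (hαmem k)
  -- separating functionals
  have hsep : ∀ k, ∃ f : EuclideanSpace ℝ (Fin n) →L[ℝ] ℝ,
      ∀ a ∈ interior W, f a < f ((1 - α k) • v + (α k) • y) := fun k =>
    geometric_hahn_banach_open_point hconv.interior isOpen_interior (hpt k)
  choose f hf using hsep
  set p : ℕ → EuclideanSpace ℝ (Fin n) := fun k => (InnerProductSpace.toDual ℝ _).symm (f k)
    with hpdef
  have hpinner : ∀ k x, (inner ℝ (p k) x : ℝ) = f k x := fun k x =>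
    InnerProductSpace.toDual_symm_apply
  have hp0 : ∀ k, p k ≠ 0 := by
    intro k h
    have h1 := hf k z hz
    have h2 : ∀ x, f k x = 0 := by
      intro x
      rw [← hpinner k x, h, inner_zero_left]
    rw [h2, h2] at h1
    exact lt_irrefl 0 h1
  -- support inequality on all of W
  have hsuppk : ∀ k, ∀ x ∈ W, (inner ℝ (p k) x : ℝ)
      ≤ (inner ℝ (p k) ((1 - α k) • v + (α k) • y) : ℝ) := by
    intro k x hx
    simp only [hpinner]
    have hcls : IsClosed {a : EuclideanSpace ℝ (Fin n) |
        f k a ≤ f k ((1 - α k) • v + (α k) • y)} :=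
      isClosed_le (f k).continuous continuous_const
    have hsub : interior W ⊆ {a | f k a ≤ f k ((1 - α k) • v + (α k) • y)} :=
      fun a ha => le_of_lt (hf k a ha)
    have := (closure_mono hsub).trans (le_of_eq hcls.closure_eq)
    exact this (hWsub hx)
  -- normalize
  set u : ℕ → EuclideanSpace ℝ (Fin n) := fun k => ‖p k‖⁻¹ • p k with hudef
  have hunorm : ∀ k, ‖u k‖ = 1 := by
    intro k
    rw [hudef]
    simp only
    rw [norm_smul, norm_inv, norm_norm, inv_mul_cancel₀ (norm_ne_zero_iff.2 (hp0 k))]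
  have husupp : ∀ k, ∀ x ∈ W, (inner ℝ (u k) x : ℝ)
      ≤ (inner ℝ (u k) v : ℝ) + α k * ((inner ℝ (u k) y : ℝ) - (inner ℝ (u k) v : ℝ)) := by
    intro k x hx
    have h1 := hsuppk k x hx
    have h2 : (inner ℝ (p k) x : ℝ) ≤ (inner ℝ (p k) v : ℝ)
        + α k * ((inner ℝ (p k) y : ℝ) - (inner ℝ (p k) v : ℝ)) := by
      have : (inner ℝ (p k) ((1 - α k) • v + (α k) • y) : ℝ)
          = (inner ℝ (p k) v : ℝ) + α k * ((inner ℝ (p k) y : ℝ) - (inner ℝ (p k) v : ℝ)) := by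
        rw [inner_add_right, real_inner_smul_right, real_inner_smul_right]; ring
      linarith [this ▸ h1]
    simp only [hudef, real_inner_smul_left]
    have hnn : (0:ℝ) ≤ ‖p k‖⁻¹ := by positivity
    nlinarith [h2, hnn]
  have hge : ∀ k, (inner ℝ (u k) v : ℝ) ≤ (inner ℝ (u k) y : ℝ) := by
    intro k
    have := husupp k v hvW
    have hαpos := (hαmem k).1
    nlinarith
  -- compactness: convergent subsequence
  have hsphere : ∀ k, u k ∈ Metric.sphere (0 : EuclideanSpace ℝ (Fin n)) 1 :=
    fun k => mem_sphere_zero_iff_norm.2 (hunorm k)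
  obtain ⟨q, hqs, φ, hφ, hφtend⟩ :=
    (isCompact_sphere (0 : EuclideanSpace ℝ (Fin n)) 1).tendsto_subseq hsphere
  have hq1 : ‖q‖ = 1 := mem_sphere_zero_iff_norm.1 hqs
  have hq0 : q ≠ 0 := by intro h; rw [h, norm_zero] at hq1; exact one_ne_zero hq1.symm
  have htq : ∀ w : EuclideanSpace ℝ (Fin n),
      Filter.Tendsto (fun j => (inner ℝ (u (φ j)) w : ℝ)) Filter.atTop (nhds (inner ℝ q w : ℝ)) := by
    intro w
    have hc : Continuous fun x : EuclideanSpace ℝ (Fin n) => (inner ℝ x w : ℝ) :=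
      Continuous.inner continuous_id continuous_const
    exact (hc.tendsto q).comp hφtend
  have hαφ : Filter.Tendsto (fun j => α (φ j)) Filter.atTop (nhds 0) :=
    hαtend.comp hφ.tendsto_atTop
  -- limit support
  have hqsupp : ∀ x ∈ W, (inner ℝ q x : ℝ) ≤ (inner ℝ q v : ℝ) := by
    intro x hx
    have hR : Filter.Tendsto (fun j => (inner ℝ (u (φ j)) v : ℝ)
        + α (φ j) * ((inner ℝ (u (φ j)) y : ℝ) - (inner ℝ (u (φ j)) v : ℝ)))
        Filter.atTop (nhds (inner ℝ q v : ℝ)) := by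
      have := (htq v).add (hαφ.mul ((htq y).sub (htq v)))
      simpa using this
    exact le_of_tendsto_of_tendsto' (htq x) hR (fun j => husupp (φ j) x hx)
  have hqy : (inner ℝ q v : ℝ) ≤ (inner ℝ q y : ℝ) :=
    le_of_tendsto_of_tendsto' (htq v) (htq y) (fun j => hge (φ j))
  -- two supporting hyperplanes at v must coincide
  obtain ⟨H, _, hHuniq⟩ := huniq v hv
  have hH1 : IsSupportingHyperplane W v {x | (inner ℝ q x : ℝ) = (inner ℝ q v : ℝ)} :=
    ⟨q, inner ℝ q v, hq0, rfl, rfl, hqsupp⟩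
  have hH2 : IsSupportingHyperplane W v {x | (inner ℝ lam x : ℝ) = (inner ℝ lam v : ℝ)} :=
    ⟨lam, inner ℝ lam v, hlam, rfl, rfl, hsupp⟩
  have heq : ({x | (inner ℝ lam x : ℝ) = (inner ℝ lam v : ℝ)} : Set _)
      = {x | (inner ℝ q x : ℝ) = (inner ℝ q v : ℝ)} := by
    rw [hHuniq _ hH2, hHuniq _ hH1]
  have hker : ∀ w : EuclideanSpace ℝ (Fin n),
      (inner ℝ lam w : ℝ) = 0 → (inner ℝ q w : ℝ) = 0 := by
    intro w hw
    have hmem : v + w ∈ {x | (inner ℝ lam x : ℝ) = (inner ℝ lam v : ℝ)} := by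
      simp only [Set.mem_setOf_eq, inner_add_right, hw, add_zero]
    rw [heq] at hmem
    simp only [Set.mem_setOf_eq, inner_add_right] at hmem
    linarith
  -- q is a positive multiple of lam
  have hll : (inner ℝ lam lam : ℝ) ≠ 0 := inner_self_ne_zero.2 hlam
  set t : ℝ := (inner ℝ lam q : ℝ) / (inner ℝ lam lam : ℝ) with htdef
  have hw0 : (inner ℝ lam (q - t • lam) : ℝ) = 0 := by
    rw [inner_sub_right, real_inner_smul_right, htdef, div_mul_cancel₀ _ hll, sub_self]
  have hqw0 : (inner ℝ q (q - t • lam) : ℝ) = 0 := hker _ hw0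
  have hwz : q - t • lam = 0 := by
    have ha : (inner ℝ (q - t • lam) q : ℝ) = 0 := by rw [real_inner_comm]; exact hqw0
    have hb : (inner ℝ (q - t • lam) lam : ℝ) = 0 := by rw [real_inner_comm]; exact hw0
    have h1 : (inner ℝ (q - t • lam) (q - t • lam) : ℝ) = 0 := by
      rw [inner_sub_right, real_inner_smul_right, ha, hb, mul_zero, sub_zero]
    exact inner_self_eq_zero.1 h1
  have hqt : q = t • lam := by
    have := sub_eq_zero.1 hwz
    exact this
  have ht0 : t ≠ 0 := by
    intro h
    rw [h, zero_smul] at hqt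
    exact hq0 hqt
  rcases lt_or_gt_of_ne ht0 with ht | ht
  · -- t < 0 : lam constant on W, contradiction with interior point
    have heqW : ∀ x ∈ W, (inner ℝ lam x : ℝ) = (inner ℝ lam v : ℝ) := by
      intro x hx
      have h1 := hqsupp x hx
      rw [hqt, real_inner_smul_left, real_inner_smul_left] at h1
      have h2 : (inner ℝ lam v : ℝ) ≤ (inner ℝ lam x : ℝ) := by nlinarith
      exact le_antisymm (hsupp x hx) h2
    obtain ⟨r, hr, hball⟩ := Metric.mem_nhds_iff.1 (mem_interior_iff_mem_nhds.1 hz)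
    have hlamn : (0:ℝ) < ‖lam‖ := norm_pos_iff.2 hlam
    set z' : EuclideanSpace ℝ (Fin n) := z + (r/(2*‖lam‖)) • lam with hz'def
    have hz'W : z' ∈ W := by
      apply hball
      rw [Metric.mem_ball, dist_eq_norm]
      have : z' - z = (r/(2*‖lam‖)) • lam := by rw [hz'def]; abel
      rw [this, norm_smul, Real.norm_eq_abs, abs_of_pos (by positivity)]
      have hln : ‖lam‖ ≠ 0 := ne_of_gt hlamn
      have he : r / (2 * ‖lam‖) * ‖lam‖ = r / 2 := by field_simp
      rw [he]
      linarith
    have h1 := heqW z' hz'W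
    have h2 := heqW z (interior_subset hz)
    rw [hz'def, inner_add_right, real_inner_smul_right, real_inner_self_eq_norm_sq] at h1
    have : r / (2*‖lam‖) * ‖lam‖^2 = 0 := by linarith
    have hpos : (0:ℝ) < r / (2*‖lam‖) * ‖lam‖^2 := by positivity
    linarith
  · -- t > 0 : contradicts hy
    rw [hqt, real_inner_smul_left, real_inner_smul_left] at hqy
    have : (inner ℝ lam v : ℝ) ≤ (inner ℝ lam y : ℝ) := by
      exact le_of_mul_le_mul_left hqy ht
    linarith
end

section
/- Let W ⊆ ℝ^n be a compact convex set and v a boundary point of W. Suppose λ ≠ 0 satisfies λ·v ≥ λ·x for all x ∈ W, and suppose that for every y ∈ ℝ^n with λ·v > λ·y there exists α* ∈ (0,1) such that (1−α)v + αy ∈ int W for all α ∈ (0, α*). Then the supporting hyperplane of W at v is unique, with normal vector λ. -/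
lemma strict_of_interior {n : ℕ} {W : Set (EuclideanSpace ℝ (Fin n))}
    {p : EuclideanSpace ℝ (Fin n)} {c : ℝ} (hp : p ≠ 0)
    (hle : ∀ y ∈ W, (inner ℝ p y : ℝ) ≤ c) {z : EuclideanSpace ℝ (Fin n)}
    (hz : z ∈ interior W) : (inner ℝ p z : ℝ) < c := by
  obtain ⟨ε, hε, hball⟩ := Metric.mem_nhds_iff.mp (mem_interior_iff_mem_nhds.mp hz)
  have hpn : (0:ℝ) < ‖p‖ := norm_pos_iff.mpr hp
  set t : ℝ := ε / (2 * ‖p‖) with ht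
  have htpos : 0 < t := by positivity
  have htp : t * ‖p‖ = ε / 2 := by
    rw [ht]; field_simp
  have hmem : z + t • p ∈ W := by
    apply hball
    simp only [Metric.mem_ball, dist_eq_norm]
    have h2 : z + t • p - z = t • p := by abel
    rw [h2, norm_smul, Real.norm_eq_abs, abs_of_pos htpos, htp]
    linarith
  have h1 := hle _ hmem
  rw [inner_add_right, real_inner_smul_right, real_inner_self_eq_norm_sq] at h1
  nlinarith [mul_pos htpos (pow_pos hpn 2)]



/-- Converse: if from `v` every direction strictly below `λ` enters the interior for small
steps, then the supporting hyperplane at `v` is unique with normal `λ`. -/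
theorem unique_supporting_hyperplane_of_segment_interior {n : ℕ}
    (W : Set (EuclideanSpace ℝ (Fin n))) (hWc : IsCompact W) (hWconv : Convex ℝ W)
    (v : EuclideanSpace ℝ (Fin n)) (hv : v ∈ frontier W)
    (lam : EuclideanSpace ℝ (Fin n)) (hlam : lam ≠ 0)
    (hsupp : ∀ x ∈ W, (inner ℝ lam x : ℝ) ≤ (inner ℝ lam v : ℝ))
    (hint : ∀ y : EuclideanSpace ℝ (Fin n), (inner ℝ lam y : ℝ) < (inner ℝ lam v : ℝ) →
      ∃ αs ∈ Set.Ioo (0:ℝ) 1, ∀ α ∈ Set.Ioo (0:ℝ) αs,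
        (1 - α) • v + α • y ∈ interior W) :
    IsSupportingHyperplane W v {x | (inner ℝ lam x : ℝ) = (inner ℝ lam v : ℝ)} ∧
    ∀ H, IsSupportingHyperplane W v H →
      H = {x | (inner ℝ lam x : ℝ) = (inner ℝ lam v : ℝ)} := by
  constructor
  · exact ⟨lam, inner ℝ lam v, hlam, rfl, rfl, hsupp⟩
  · rintro H ⟨p, c, hp, rfl, hpv, hpW⟩
    -- key: lam-strict implies p-strict
    have key : ∀ y : EuclideanSpace ℝ (Fin n),
        (inner ℝ lam y : ℝ) < (inner ℝ lam v : ℝ) → (inner ℝ p y : ℝ) < c := by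
      intro y hy
      obtain ⟨αs, hαs, hmem⟩ := hint y hy
      have hα : (αs / 2) ∈ Set.Ioo (0:ℝ) αs := ⟨by linarith [hαs.1], by linarith [hαs.1]⟩
      have hz := hmem _ hα
      have hlt := strict_of_interior hp hpW hz
      rw [inner_add_right, real_inner_smul_right, real_inner_smul_right, hpv] at hlt
      have hαpos : (0:ℝ) < αs / 2 := hα.1
      nlinarith
    have keyg : ∀ y : EuclideanSpace ℝ (Fin n),
        (inner ℝ lam v : ℝ) < (inner ℝ lam y : ℝ) → c < (inner ℝ p y : ℝ) := by
      intro y hy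
      have h1 : (inner ℝ lam ((2:ℝ) • v - y) : ℝ) < inner ℝ lam v := by
        rw [inner_sub_right, real_inner_smul_right]; linarith
      have h2 := key _ h1
      rw [inner_sub_right, real_inner_smul_right, hpv] at h2
      linarith
    have keyeq : ∀ y : EuclideanSpace ℝ (Fin n),
        (inner ℝ lam y : ℝ) = (inner ℝ lam v : ℝ) → (inner ℝ p y : ℝ) = c := by
      intro y hy
      have hln : (0:ℝ) < ‖lam‖ ^ 2 := pow_pos (norm_pos_iff.mpr hlam) 2
      have hle : (inner ℝ p y : ℝ) ≤ c := by
        by_contra h'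
        push_neg at h'
        set k : ℝ := inner ℝ p lam with hk
        rcases le_or_gt k 0 with hk0 | hk0
        · -- ε = 1
          have h1 : (inner ℝ lam (y - lam) : ℝ) < inner ℝ lam v := by
            rw [inner_sub_right, real_inner_self_eq_norm_sq]; linarith
          have h2 := key _ h1
          rw [inner_sub_right, ← hk] at h2
          linarith
        · set ε : ℝ := (inner ℝ p y - c) / (2 * k) with hε
          have hεpos : 0 < ε := div_pos (by linarith) (by linarith)
          have h1 : (inner ℝ lam (y - ε • lam) : ℝ) < inner ℝ lam v := by
            rw [inner_sub_right, real_inner_smul_right, real_inner_self_eq_norm_sq]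
            nlinarith
          have h2 := key _ h1
          rw [inner_sub_right, real_inner_smul_right, ← hk] at h2
          have hεk : ε * k = (inner ℝ p y - c) / 2 := by
            rw [hε]; field_simp
          rw [hεk] at h2
          linarith
      have hge : c ≤ (inner ℝ p y : ℝ) := by
        by_contra h'
        push_neg at h'
        set k : ℝ := inner ℝ p lam with hk
        rcases le_or_gt k 0 with hk0 | hk0
        · have h1 : (inner ℝ lam v : ℝ) < inner ℝ lam (y + lam) := by
            rw [inner_add_right, real_inner_self_eq_norm_sq]; linarith
          have h2 := keyg _ h1
          rw [inner_add_right, ← hk] at h2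
          linarith
        · set ε : ℝ := (c - inner ℝ p y) / (2 * k) with hε
          have hεpos : 0 < ε := div_pos (by linarith) (by linarith)
          have h1 : (inner ℝ lam v : ℝ) < inner ℝ lam (y + ε • lam) := by
            rw [inner_add_right, real_inner_smul_right, real_inner_self_eq_norm_sq]
            nlinarith
          have h2 := keyg _ h1
          rw [inner_add_right, real_inner_smul_right, ← hk] at h2
          have hεk : ε * k = (c - inner ℝ p y) / 2 := by
            rw [hε]; field_simp
          rw [hεk] at h2
          linarith
      linarith
    ext x
    simp only [Set.mem_setOf_eq]
    constructor
    · intro hx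
      rcases lt_trichotomy ((inner ℝ lam x : ℝ)) ((inner ℝ lam v : ℝ)) with h | h | h
      · exact absurd hx (ne_of_lt (key _ h))
      · exact h
      · exact absurd hx (ne_of_gt (keyg _ h))
    · exact keyeq x
end

section
/- Let Z ⊆ ℝ^n be a finite set contained in the open set U, and let W = conv(Z). Then there exists ε' > 0 such that the set W' = ⋃_{v∈W} B̄(v, ε') (the closed ε'-neighborhood of W) is contained in U, and W' is a compact convex set admitting a unique supporting hyperplane at every boundary point. -/
/-- Thickening the convex hull of a finite set inside an open set: there is `ε' > 0` such
that the closed `ε'`-neighborhood of the hull stays in the open set, and it is a compact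
convex set with a unique supporting hyperplane at every boundary point. -/
theorem thickened_polytope_smooth {n : ℕ}
    (Z : Finset (EuclideanSpace ℝ (Fin n))) (U : Set (EuclideanSpace ℝ (Fin n)))
    (hU : IsOpen U) (hZU : (Z : Set (EuclideanSpace ℝ (Fin n))) ⊆ U)
    (hWU : convexHull ℝ (Z : Set (EuclideanSpace ℝ (Fin n))) ⊆ U) :
    ∃ ε' > (0:ℝ), ∃ W' : Set (EuclideanSpace ℝ (Fin n)),
      W' = (⋃ v ∈ convexHull ℝ (Z : Set (EuclideanSpace ℝ (Fin n))), Metric.closedBall v ε') ∧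
      W' ⊆ U ∧ IsCompact W' ∧ Convex ℝ W' ∧
      ∀ x ∈ frontier W', ∃! H, IsSupportingHyperplane W' x H := by
  rcases Z.eq_empty_or_nonempty with rfl | hZne
  · exact ⟨1, one_pos, ∅, by simp, Set.empty_subset U, isCompact_empty, convex_empty, by simp⟩
  set W : Set (EuclideanSpace ℝ (Fin n)) := convexHull ℝ (Z : Set (EuclideanSpace ℝ (Fin n)))
    with hWdef
  have hWne : W.Nonempty := (Finset.coe_nonempty.mpr hZne).mono (subset_convexHull ℝ _)
  have hK : IsCompact W := Z.finite_toSet.isCompact_convexHull ℝ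
  have hC : Convex ℝ W := convex_convexHull ℝ _
  obtain ⟨ε, εpos, hsub⟩ := hK.exists_cthickening_subset_open hU hWU
  have hbi : Metric.cthickening ε W = ⋃ v ∈ W, Metric.closedBall v ε :=
    hK.cthickening_eq_biUnion_closedBall εpos.le
  refine ⟨ε, εpos, Metric.cthickening ε W, hbi, hsub, hK.cthickening, hC.cthickening ε, ?_⟩
  intro x hx
  have hxW' : x ∈ Metric.cthickening ε W := Metric.isClosed_cthickening.frontier_subset hx
  have hxnotint : x ∉ interior (Metric.cthickening ε W) := hx.2
  -- nearest point
  obtain ⟨w, hwW, hweq⟩ := hK.exists_infDist_eq_dist hWne x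
  have hle : Metric.infDist x W ≤ ε := by
    rw [hbi, Set.mem_iUnion₂] at hxW'
    obtain ⟨v, hvW, hv⟩ := hxW'
    exact le_trans (Metric.infDist_le_dist_of_mem hvW) (Metric.mem_closedBall.mp hv)
  have hge : ¬ dist x w < ε := by
    intro hlt
    have : x ∈ Metric.thickening ε W := Metric.mem_thickening_iff.mpr ⟨w, hwW, hlt⟩
    exact hxnotint (interior_maximal (Metric.thickening_subset_cthickening ε W)
      Metric.isOpen_thickening this)
  have hdist : dist x w = ε := le_antisymm (hweq ▸ hle) (not_lt.mp hge)
  set p : EuclideanSpace ℝ (Fin n) := x - w with hpdef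
  have hpnorm : ‖p‖ = ε := by rw [hpdef, ← dist_eq_norm]; exact hdist
  have hp : p ≠ 0 := by
    intro h; rw [h, norm_zero] at hpnorm; exact εpos.ne hpnorm
  -- projection characterization
  have hproj : ∀ y ∈ W, (inner ℝ p (y - w) : ℝ) ≤ 0 := by
    have hiInf : ‖x - w‖ = ⨅ w' : W, ‖x - w'‖ := by
      have h1 : Metric.infDist x W = ⨅ w' : W, dist x w' := by
        rw [Metric.infDist_eq_iInf]
      simp_rw [← dist_eq_norm]
      rw [← h1, ← hweq]
    exact (norm_eq_iInf_iff_real_inner_le_zero hC hwW).mp hiInf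
  have hCS : ∀ y : EuclideanSpace ℝ (Fin n), (inner ℝ p y : ℝ) ≤ ‖p‖ * ‖y‖ :=
    fun y => real_inner_le_norm p y
  have hpx : (inner ℝ p x : ℝ) = (inner ℝ p w : ℝ) + ε * ‖p‖ := by
    have : (inner ℝ p x : ℝ) = inner ℝ p w + inner ℝ p (x - w) := by
      rw [← inner_add_right]; congr 1; abel
    rw [this, hpdef, real_inner_self_eq_norm_sq]
    rw [← hpdef, hpnorm]
    ring
  -- support inequality for p
  have hsupp : ∀ y ∈ Metric.cthickening ε W, (inner ℝ p y : ℝ) ≤ inner ℝ p x := by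
    intro y hy
    rw [hbi, Set.mem_iUnion₂] at hy
    obtain ⟨v, hvW, hv⟩ := hy
    have h1 : (inner ℝ p y : ℝ) = inner ℝ p v + inner ℝ p (y - v) := by
      rw [← inner_add_right]; congr 1; abel
    have h2 : (inner ℝ p v : ℝ) ≤ inner ℝ p w := by
      have := hproj v hvW
      rw [inner_sub_right] at this
      linarith
    have h3 : (inner ℝ p (y - v) : ℝ) ≤ ‖p‖ * ε := by
      calc (inner ℝ p (y - v) : ℝ) ≤ ‖p‖ * ‖y - v‖ := hCS _
        _ ≤ ‖p‖ * ε := by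
            apply mul_le_mul_of_nonneg_left _ (norm_nonneg p)
            rw [← dist_eq_norm]; exact Metric.mem_closedBall.mp hv
    rw [hpx]; linarith [h1, h2, h3]
  refine ⟨{y | (inner ℝ p y : ℝ) = inner ℝ p x}, ⟨p, inner ℝ p x, hp, rfl, rfl, hsupp⟩, ?_⟩
  -- uniqueness
  rintro H ⟨q, d, hq0, rfl, hqx, hqle⟩
  have hqnorm : (0:ℝ) < ‖q‖ := norm_pos_iff.mpr hq0
  -- test point in the ball around w
  set y₀ : EuclideanSpace ℝ (Fin n) := w + (ε / ‖q‖) • q with hy₀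
  have hy₀mem : y₀ ∈ Metric.cthickening ε W := by
    rw [hbi]
    refine Set.mem_biUnion hwW ?_
    rw [Metric.mem_closedBall, dist_eq_norm]
    have : y₀ - w = (ε / ‖q‖) • q := by rw [hy₀]; abel
    rw [this, norm_smul, Real.norm_eq_abs, abs_of_pos (div_pos εpos hqnorm),
      div_mul_cancel₀ _ hqnorm.ne']
  have hq1 : (inner ℝ q y₀ : ℝ) = inner ℝ q w + ε * ‖q‖ := by
    rw [hy₀, inner_add_right, real_inner_smul_right, real_inner_self_eq_norm_sq]
    field_simp
  have hq2 : (inner ℝ q x : ℝ) = inner ℝ q w + inner ℝ q p := by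
    rw [← inner_add_right]; congr 1; rw [hpdef]; abel
  have hqle₀ : (inner ℝ q y₀ : ℝ) ≤ d := hqle y₀ hy₀mem
  have hkey : (inner ℝ q p : ℝ) = ‖q‖ * ‖p‖ := by
    have hub : (inner ℝ q p : ℝ) ≤ ‖q‖ * ‖p‖ := real_inner_le_norm q p
    have hlb : ε * ‖q‖ ≤ (inner ℝ q p : ℝ) := by
      rw [hq1] at hqle₀; rw [← hqx, hq2] at hqle₀; linarith
    rw [hpnorm] at hub ⊢
    linarith [hub, hlb]
  have heq : ‖p‖ • q = ‖q‖ • p := inner_eq_norm_mul_iff_real.mp hkey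
  have hqp : q = (‖q‖ / ε) • p := by
    have : ε • q = ‖q‖ • p := by rw [← hpnorm]; exact heq
    calc q = (ε⁻¹ * ε) • q := by rw [inv_mul_cancel₀ εpos.ne', one_smul]
      _ = ε⁻¹ • (ε • q) := by rw [mul_smul]
      _ = ε⁻¹ • (‖q‖ • p) := by rw [this]
      _ = (‖q‖ / ε) • p := by rw [smul_smul]; congr 1; field_simp
  set t : ℝ := ‖q‖ / ε with htdef
  have htpos : 0 < t := div_pos hqnorm εpos
  have hinner : ∀ y : EuclideanSpace ℝ (Fin n), (inner ℝ q y : ℝ) = t * inner ℝ p y := by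
    intro y; rw [hqp, real_inner_smul_left]
  have hd : d = t * inner ℝ p x := by rw [← hqx, hinner]
  ext y
  simp only [Set.mem_setOf_eq, hinner, hd]
  constructor
  · intro h; exact mul_left_cancel₀ htpos.ne' h
  · intro h; rw [h]
end

section
/- The closed ε-neighborhood W' = {x ∈ ℝ^n : dist(x, W) ≤ ε} of a nonempty compact convex set W ⊆ ℝ^n is compact and convex, and if ε > 0 it has a unique supporting hyperplane at each of its boundary points. -/
set_option maxHeartbeats 1000000 in
/-- The closed ε-neighborhood of a nonempty compact convex set is compact and convex, and
for ε > 0 it has a unique supporting hyperplane at each boundary point. -/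
theorem closed_neighborhood_smooth {n : ℕ}
    (W : Set (EuclideanSpace ℝ (Fin n))) (hWne : W.Nonempty) (hWc : IsCompact W)
    (hWconv : Convex ℝ W) (ε : ℝ) (hε : 0 ≤ ε) :
    IsCompact {x : EuclideanSpace ℝ (Fin n) | Metric.infDist x W ≤ ε} ∧
    Convex ℝ {x : EuclideanSpace ℝ (Fin n) | Metric.infDist x W ≤ ε} ∧
    (0 < ε → ∀ x ∈ frontier {x : EuclideanSpace ℝ (Fin n) | Metric.infDist x W ≤ ε},
      ∃! H, IsSupportingHyperplane {x : EuclideanSpace ℝ (Fin n) | Metric.infDist x W ≤ ε} x H) := by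
  -- W' equals the closed thickening of W
  have hW'eq : {x : EuclideanSpace ℝ (Fin n) | Metric.infDist x W ≤ ε}
      = Metric.cthickening ε W := by
    ext y
    rw [Set.mem_setOf_eq, Metric.mem_cthickening_iff,
      ENNReal.le_ofReal_iff_toReal_le (Metric.infEdist_ne_top hWne) hε]
    rfl
  refine ⟨hW'eq ▸ hWc.cthickening, hW'eq ▸ hWconv.cthickening ε, ?_⟩
  intro hε' x hx
  set W' := {x : EuclideanSpace ℝ (Fin n) | Metric.infDist x W ≤ ε} with hW'def
  -- W' is closed
  have hW'closed : IsClosed W' := by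
    rw [hW'eq]; exact Metric.isClosed_cthickening
  have hxW' : x ∈ W' := hW'closed.frontier_subset hx
  -- infDist x W = ε
  have hnotint : x ∉ interior W' := fun h => hx.2 h
  have hdx : Metric.infDist x W = ε := by
    have hxle : Metric.infDist x W ≤ ε := hxW'
    rcases lt_or_eq_of_le hxle with h | h
    · have hopen : IsOpen {y : EuclideanSpace ℝ (Fin n) | Metric.infDist y W < ε} :=
        isOpen_lt (Metric.continuous_infDist_pt W) continuous_const
      have hsub : {y : EuclideanSpace ℝ (Fin n) | Metric.infDist y W < ε} ⊆ W' :=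
        fun y hy => show Metric.infDist y W ≤ ε from le_of_lt hy
      exact absurd (interior_maximal hsub hopen h) hnotint
    · exact h
  -- nearest point w ∈ W
  obtain ⟨w, hwW, hw⟩ := hWc.exists_infDist_eq_dist hWne x
  have hdistxw : dist x w = ε := hw ▸ hdx
  -- projection inequality: ∀ v ∈ W, ⟪x - w, v - w⟫ ≤ 0
  haveI : Nonempty W := hWne.to_subtype
  have hproj : ∀ v ∈ W, (inner ℝ (x - w) (v - w) : ℝ) ≤ 0 := by
    have hbdd : BddBelow (Set.range fun v : W => ‖x - (v : EuclideanSpace ℝ (Fin n))‖) :=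
      ⟨0, by rintro b ⟨v, rfl⟩; exact norm_nonneg _⟩
    have hmin : ‖x - w‖ = ⨅ v : W, ‖x - (v : EuclideanSpace ℝ (Fin n))‖ := by
      refine le_antisymm (le_ciInf fun v => ?_) (ciInf_le hbdd ⟨w, hwW⟩)
      calc ‖x - w‖ = Metric.infDist x W := by rw [hw, dist_eq_norm]
        _ ≤ dist x (v : EuclideanSpace ℝ (Fin n)) := Metric.infDist_le_dist_of_mem v.2
        _ = ‖x - v‖ := dist_eq_norm _ _
    exact (norm_eq_iInf_iff_real_inner_le_zero hWconv hwW).mp hmin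
  set p : EuclideanSpace ℝ (Fin n) := x - w with hpdef
  have hpnorm : ‖p‖ = ε := by rw [hpdef, ← dist_eq_norm, hdistxw]
  have hpne : p ≠ 0 := by
    intro h; rw [h, norm_zero] at hpnorm; exact absurd hpnorm.symm (ne_of_gt hε')
  -- key support inequality for p
  have hsupp : ∀ y ∈ W', (inner ℝ p y : ℝ) ≤ (inner ℝ p x : ℝ) := by
    intro y hy
    obtain ⟨v, hvW, hv⟩ := hWc.exists_infDist_eq_dist hWne y
    have hyv : ‖y - v‖ ≤ ε := by rw [← dist_eq_norm, ← hv]; exact hy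
    have h1 : (inner ℝ p (y - v) : ℝ) ≤ ε * ε := by
      calc (inner ℝ p (y - v) : ℝ) ≤ ‖p‖ * ‖y - v‖ := real_inner_le_norm _ _
        _ ≤ ε * ε := by rw [hpnorm]; exact mul_le_mul_of_nonneg_left hyv hε
    have h2 : (inner ℝ p (v - w) : ℝ) ≤ 0 := hproj v hvW
    have h3 : (inner ℝ p (w - x) : ℝ) = -(ε * ε) := by
      have : w - x = -p := by rw [hpdef]; abel
      rw [this, inner_neg_right, real_inner_self_eq_norm_mul_norm, hpnorm]
    have key : (inner ℝ p (y - x) : ℝ) ≤ 0 := by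
      have hsum : y - x = (y - v) + (v - w) + (w - x) := by abel
      rw [hsum, inner_add_right, inner_add_right, h3]
      linarith
    have := key
    rw [inner_sub_right] at this
    linarith
  -- existence and uniqueness
  refine ⟨{y | (inner ℝ p y : ℝ) = (inner ℝ p x : ℝ)},
    ⟨p, inner ℝ p x, hpne, rfl, rfl, hsupp⟩, ?_⟩
  rintro H ⟨q, c, hq0, rfl, hqx, hqle⟩
  -- the special point z = w + (ε/‖q‖) • q lies in W'
  have hqnorm : 0 < ‖q‖ := norm_pos_iff.mpr hq0
  set z : EuclideanSpace ℝ (Fin n) := w + (ε / ‖q‖) • q with hzdef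
  have hzW' : z ∈ W' := by
    have : dist z w ≤ ε := by
      rw [hzdef, dist_eq_norm, add_sub_cancel_left, norm_smul, Real.norm_eq_abs,
        abs_of_nonneg (by positivity)]
      rw [div_mul_cancel₀ _ (ne_of_gt hqnorm)]
    exact le_trans (Metric.infDist_le_dist_of_mem hwW) this
  have hz : (inner ℝ q z : ℝ) ≤ c := hqle z hzW'
  have hzval : (inner ℝ q z : ℝ) = (inner ℝ q w : ℝ) + ε * ‖q‖ := by
    rw [hzdef, inner_add_right, real_inner_smul_right, real_inner_self_eq_norm_mul_norm]
    field_simp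
  -- Cauchy–Schwarz equality
  have hCS : (inner ℝ q p : ℝ) = ‖q‖ * ‖p‖ := by
    have hle : (inner ℝ q p : ℝ) ≤ ‖q‖ * ‖p‖ := real_inner_le_norm _ _
    have hge : ε * ‖q‖ ≤ (inner ℝ q p : ℝ) := by
      have h1 : (inner ℝ q w : ℝ) + ε * ‖q‖ ≤ (inner ℝ q x : ℝ) := by
        rw [← hzval, hqx]; exact hz
      have h2 : (inner ℝ q p : ℝ) = (inner ℝ q x : ℝ) - (inner ℝ q w : ℝ) := by
        rw [hpdef, inner_sub_right]
      linarith
    rw [hpnorm]; linarith [hge, hle, hpnorm ▸ hle]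
  have heq : ‖p‖ • q = ‖q‖ • p := inner_eq_norm_mul_iff_real.mp hCS
  -- q = (‖q‖/ε) • p
  have hqp : q = (‖q‖ / ε) • p := by
    have h1 : ε • q = ‖q‖ • p := by rw [← hpnorm]; exact heq
    have h3 : ε⁻¹ • (ε • q) = ε⁻¹ • (‖q‖ • p) := by rw [h1]
    rw [smul_smul, inv_mul_cancel₀ (ne_of_gt hε'), one_smul, smul_smul,
      ← div_eq_inv_mul] at h3
    exact h3
  have ht : (0:ℝ) < ‖q‖ / ε := div_pos hqnorm hε'
  have hiq : ∀ u : EuclideanSpace ℝ (Fin n),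
      (inner ℝ q u : ℝ) = (‖q‖ / ε) * (inner ℝ p u : ℝ) := by
    intro u
    conv_lhs => rw [hqp]
    rw [real_inner_smul_left]
  have hc : c = (‖q‖ / ε) * (inner ℝ p x : ℝ) := by rw [← hqx]; exact hiq x
  ext y
  simp only [Set.mem_setOf_eq]
  rw [hiq, hc]
  exact ⟨fun h => mul_left_cancel₀ (ne_of_gt ht) h, fun h => by rw [h]⟩
end

section
/- With A_i, A_{-i} finite, g_i : A_i × A_{-i} → ℝ with pure minmax value min_{a_{-i}} max_{a_i} g_i(a_i,a_{-i}) = 0, and η ≥ 0: the quantity v̲(η) = min_{a} max{ g_i(a), max_{a_i' ≠ a_i} g_i(a_i', a_{-i}) + η } equals 0 if and only if there exists an action profile a̲ with g_i(a̲) = 0 (i.e., a̲ attains the minmax value) and g_i(a̲) − g_i(a_i', a̲_{-i}) ≥ η for every a_i' ≠ a̲_i. -/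
/-- With |A_i| ≥ 2, pure minmax value 0 and η ≥ 0:
`v̲(η) = min_a max{g(a), max_{a_i' ≠ a_i} g(a_i', a_{-i}) + η}` equals 0 iff there is an
action profile `a̲` with `g(a̲) = 0` and `g(a̲) - g(a_i', a̲_{-i}) ≥ η` for all `a_i' ≠ a̲_i`. -/
theorem vlow_eq_zero_iff {Ai Ani : Type*} [Fintype Ai] [Fintype Ani] [DecidableEq Ai]
    [Nonempty Ai] [Nonempty Ani]
    (hcard : 1 < Fintype.card Ai)
    (g : Ai × Ani → ℝ)
    (hminmax : Finset.univ.inf' Finset.univ_nonempty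
      (fun ani : Ani => Finset.univ.sup' Finset.univ_nonempty fun ai : Ai => g (ai, ani)) = 0)
    (η : ℝ) (hη : 0 ≤ η) :
    (Finset.univ.inf' Finset.univ_nonempty (fun a : Ai × Ani =>
        max (g a) ((Finset.univ.erase a.1).sup'
          ((Finset.erase_nonempty (Finset.mem_univ a.1)).mpr
            (Finset.one_lt_card_iff_nontrivial.mp (by simpa [Finset.card_univ] using hcard)))
          fun ai' : Ai => g (ai', a.2) + η)) = 0)
    ↔ ∃ a : Ai × Ani, g a = 0 ∧ ∀ ai' : Ai, ai' ≠ a.1 → g a - g (ai', a.2) ≥ η := by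
  have hne : ∀ a1 : Ai, (Finset.univ.erase a1).Nonempty := fun a1 =>
    (Finset.erase_nonempty (Finset.mem_univ a1)).mpr
      (Finset.one_lt_card_iff_nontrivial.mp (by simpa [Finset.card_univ] using hcard))
  -- minmax ≥ 0 pointwise
  have hM : ∀ ani : Ani, 0 ≤ Finset.univ.sup' Finset.univ_nonempty fun ai : Ai => g (ai, ani) :=
    fun ani => hminmax ▸ Finset.inf'_le _ (Finset.mem_univ ani)
  -- max over insert
  have hsup_eq : ∀ a : Ai × Ani,
      max (g a) ((Finset.univ.erase a.1).sup' (hne a.1) fun ai' : Ai => g (ai', a.2))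
        = Finset.univ.sup' Finset.univ_nonempty fun ai : Ai => g (ai, a.2) := by
    intro a
    apply le_antisymm
    · refine max_le (Finset.le_sup' (f := fun ai : Ai => g (ai, a.2)) (Finset.mem_univ a.1)) ?_
      exact Finset.sup'_le _ _ fun ai' hai' =>
        Finset.le_sup' (f := fun ai : Ai => g (ai, a.2)) (Finset.mem_univ ai')
    · refine Finset.sup'_le _ _ fun ai _ => ?_
      by_cases hc : ai = a.1
      · subst hc; exact le_max_left _ _
      · exact le_trans (Finset.le_sup' (f := fun ai' : Ai => g (ai', a.2))
          (Finset.mem_erase.mpr ⟨hc, Finset.mem_univ _⟩)) (le_max_right _ _)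
  -- every term of the outer inf' is ≥ 0
  have hF_ge : ∀ a : Ai × Ani, (0:ℝ) ≤
      max (g a) ((Finset.univ.erase a.1).sup' (hne a.1) fun ai' : Ai => g (ai', a.2) + η) := by
    intro a
    refine le_trans (hM a.2) ?_
    rw [← hsup_eq a]
    gcongr
    exact le_add_of_nonneg_right hη
  constructor
  · intro h
    obtain ⟨a, -, ha⟩ := Finset.exists_mem_eq_inf' (Finset.univ_nonempty :
        (Finset.univ : Finset (Ai × Ani)).Nonempty) (fun a : Ai × Ani =>
        max (g a) ((Finset.univ.erase a.1).sup' (hne a.1) fun ai' : Ai => g (ai', a.2) + η))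
    rw [h] at ha
    have hFa := ha.symm
    -- hFa : max ... = 0
    have hga : g a ≤ 0 := hFa ▸ le_max_left _ _
    have hsup : ∀ ai' : Ai, ai' ≠ a.1 → g (ai', a.2) + η ≤ 0 := by
      intro ai' hai'
      calc g (ai', a.2) + η
          ≤ (Finset.univ.erase a.1).sup' (hne a.1) (fun ai' : Ai => g (ai', a.2) + η) :=
            Finset.le_sup' (f := fun ai' : Ai => g (ai', a.2) + η)
              (Finset.mem_erase.mpr ⟨hai', Finset.mem_univ _⟩)
        _ ≤ 0 := hFa ▸ le_max_right _ _
    have hM0 : (Finset.univ.sup' Finset.univ_nonempty fun ai : Ai => g (ai, a.2)) = 0 := by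
      refine le_antisymm ?_ (hM a.2)
      rw [← hsup_eq a]
      refine max_le hga (Finset.sup'_le _ _ fun ai' hai' => ?_)
      have := hsup ai' (Finset.mem_erase.mp hai').1
      linarith
    obtain ⟨ai, -, hai⟩ := Finset.exists_mem_eq_sup' (Finset.univ_nonempty :
        (Finset.univ : Finset Ai).Nonempty) (fun ai : Ai => g (ai, a.2))
    have hgai : g (ai, a.2) = 0 := by rw [← hM0, hai]
    refine ⟨(ai, a.2), hgai, fun ai' hai' => ?_⟩
    simp only at hai' ⊢
    rw [hgai]
    by_cases hc : ai' = a.1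
    · -- then ai ≠ a.1
      have hane : ai ≠ a.1 := fun he => hai' (hc.trans he.symm)
      have h1 : g (ai, a.2) + η ≤ 0 := hsup ai hane
      have hη0 : η = 0 := le_antisymm (by linarith) hη
      have : g (ai', a.2) ≤ 0 := by
        rw [← hM0]
        exact Finset.le_sup' (f := fun ai : Ai => g (ai, a.2)) (Finset.mem_univ ai')
      linarith
    · have := hsup ai' hc
      linarith
  · rintro ⟨a, hg0, hbr⟩
    refine le_antisymm ?_ (Finset.le_inf' _ _ fun a' _ => hF_ge a')
    refine le_trans (Finset.inf'_le _ (Finset.mem_univ a)) ?_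
    refine max_le (le_of_eq hg0) (Finset.sup'_le _ _ fun ai' hai' => ?_)
    have := hbr ai' (Finset.mem_erase.mp hai').1
    linarith
end

section
/- Monotonicity of decomposability in the discount factor: Let M be a finite set, W ⊆ ℝ^n convex, δ, δ' ∈ (0,1) with δ < δ', and suppose v ∈ W is decomposed by ((a,ρ), w^δ) with respect to W and δ, meaning v = (1−δ)g(a) + δ E[w^δ(·)|(a,ρ)] with w^δ : M → W, and the η-strict incentive constraints hold for player i's nontrivial deviations. Define w^{δ'}(m) = ((δ'−δ)/(δ'(1−δ))) v + (δ(1−δ'))/(δ'(1−δ)) w^δ(m). Then w^{δ'}(m) ∈ W for all m, v = (1−δ')g(a) + δ' E[w^{δ'}(·)|(a,ρ)], and for any deviation payoff pair (g_i', p') (deviation stage payoff g_i' and induced message distribution p' ∈ Δ(M)), the inequality (1−δ)g_i(a) + δ E_{p}[w_i^δ] − (1−δ)η ≥ (1−δ)g_i' + δ E_{p'}[w_i^δ] implies (1−δ')g_i(a) + δ' E_{p}[w_i^{δ'}] − (1−δ')η ≥ (1−δ')g_i' + δ' E_{p'}[w_i^{δ'}], where p = p̃(·|(a,ρ)). -/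
/-- Monotonicity of decomposability in the discount factor: if `((a,ρ), w^δ)` decomposes
`v ∈ W` with respect to convex `W` and `δ`, then the convex combination
`w^{δ'}(m) = ((δ'-δ)/(δ'(1-δ))) v + (δ(1-δ')/(δ'(1-δ))) w^δ(m)` takes values in `W`,
decomposes `v` at `δ'`, and preserves all η-strict incentive inequalities. -/
theorem decomposition_monotone {n : ℕ} {M : Type*} [Fintype M]
    (W : Set (EuclideanSpace ℝ (Fin n))) (hW : Convex ℝ W)
    (δ δ' : ℝ) (hδ : δ ∈ Set.Ioo (0:ℝ) 1) (hδ' : δ' ∈ Set.Ioo (0:ℝ) 1) (hlt : δ < δ')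
    (v g : EuclideanSpace ℝ (Fin n)) (hvW : v ∈ W)
    (wδ : M → EuclideanSpace ℝ (Fin n)) (hwW : ∀ m, wδ m ∈ W)
    (p : M → ℝ) (hp : ∀ m, 0 ≤ p m) (hp1 : ∑ m, p m = 1)
    (η : ℝ) (hη : 0 ≤ η)
    (hv : v = (1 - δ) • g + δ • ∑ m, p m • wδ m) :
    (∀ m, ((δ' - δ)/(δ' * (1 - δ))) • v + ((δ * (1 - δ'))/(δ' * (1 - δ))) • wδ m ∈ W) ∧
    (v = (1 - δ') • g + δ' • ∑ m,
      p m • (((δ' - δ)/(δ' * (1 - δ))) • v + ((δ * (1 - δ'))/(δ' * (1 - δ))) • wδ m)) ∧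
    (∀ (i : Fin n) (gi' : ℝ) (p' : M → ℝ), (∀ m, 0 ≤ p' m) → (∑ m, p' m = 1) →
      ((1 - δ) * g i + δ * ∑ m, p m * wδ m i - (1 - δ) * η ≥
        (1 - δ) * gi' + δ * ∑ m, p' m * wδ m i) →
      ((1 - δ') * g i + δ' * ∑ m,
          p m * (((δ' - δ)/(δ' * (1 - δ))) * v i + ((δ * (1 - δ'))/(δ' * (1 - δ))) * wδ m i)
          - (1 - δ') * η ≥
        (1 - δ') * gi' + δ' * ∑ m,
          p' m * (((δ' - δ)/(δ' * (1 - δ))) * v i + ((δ * (1 - δ'))/(δ' * (1 - δ))) * wδ m i))) := by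
  obtain ⟨hδ0, hδ1⟩ := hδ
  obtain ⟨hδ'0, hδ'1⟩ := hδ'
  have hden : (0:ℝ) < δ' * (1 - δ) := by nlinarith
  have hα0 : (0:ℝ) ≤ (δ' - δ)/(δ' * (1 - δ)) := div_nonneg (by linarith) hden.le
  have hβ0 : (0:ℝ) ≤ (δ * (1 - δ'))/(δ' * (1 - δ)) := div_nonneg (by nlinarith) hden.le
  have hab : (δ' - δ)/(δ' * (1 - δ)) + (δ * (1 - δ'))/(δ' * (1 - δ)) = 1 := by
    field_simp
    ring
  have hsum : ∀ (q : M → ℝ), (∑ m, q m = 1) →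
      (∑ m, q m • (((δ' - δ)/(δ' * (1 - δ))) • v + ((δ * (1 - δ'))/(δ' * (1 - δ))) • wδ m))
      = ((δ' - δ)/(δ' * (1 - δ))) • v
        + ((δ * (1 - δ'))/(δ' * (1 - δ))) • ∑ m, q m • wδ m := by
    intro q hq
    simp only [smul_add, Finset.sum_add_distrib]
    congr 1
    · rw [← Finset.sum_smul, hq, one_smul]
    · rw [Finset.smul_sum]
      exact Finset.sum_congr rfl fun m _ => smul_comm _ _ _
  refine ⟨fun m => hW hvW (hwW m) hα0 hβ0 hab, ?_, ?_⟩
  · rw [hsum p hp1]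
    rw [hv]
    match_scalars <;> field_simp <;> ring
  · intro i gi' p' hp' hp'1 hIC
    have hpt : ∀ (q : M → ℝ), (∑ m, q m = 1) →
        (∑ m, q m * (((δ' - δ)/(δ' * (1 - δ))) * v i
            + ((δ * (1 - δ'))/(δ' * (1 - δ))) * wδ m i))
        = ((δ' - δ)/(δ' * (1 - δ))) * v i
          + ((δ * (1 - δ'))/(δ' * (1 - δ))) * ∑ m, q m * wδ m i := by
      intro q hq
      rw [Finset.mul_sum]
      simp only [mul_add, Finset.sum_add_distrib]
      congr 1
      · rw [← Finset.sum_mul, hq, one_mul]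
      · exact Finset.sum_congr rfl fun m _ => by ring
    rw [hpt p hp1, hpt p' hp'1]
    have h1δ : (0:ℝ) < 1 - δ := by linarith
    have key : (1 - δ') * g i + δ' * (((δ' - δ)/(δ' * (1 - δ))) * v i
          + ((δ * (1 - δ'))/(δ' * (1 - δ))) * ∑ m, p m * wδ m i)
        - (1 - δ') * η
        - ((1 - δ') * gi' + δ' * (((δ' - δ)/(δ' * (1 - δ))) * v i
          + ((δ * (1 - δ'))/(δ' * (1 - δ))) * ∑ m, p' m * wδ m i))
        = ((1 - δ')/(1 - δ)) * ((1 - δ) * g i + δ * ∑ m, p m * wδ m i - (1 - δ) * η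
          - ((1 - δ) * gi' + δ * ∑ m, p' m * wδ m i)) := by
      field_simp
      ring
    have hc : (0:ℝ) ≤ (1 - δ')/(1 - δ) := div_nonneg (by linarith) h1δ.le
    nlinarith [mul_nonneg hc (sub_nonneg.mpr hIC)]
end
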